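/- arXiv:math/0608457 — 2 statements merged into one kernel-verified Lean document; each statement's English description precedes it below -/
import Mathlib

section
/- For 1 ≤ n ≤ q let L_n = det[(B_{i,j})_{1≤i,j≤n}] − (−1)^n, the determinant of the upper-left n×n submatrix of the matrix of indeterminates minus (−1)^n. Then the ideal of ℤ[B_{i,j}] generated by the polynomials 1 + C_{1,1}, 1 + C_{2,2}, …, 1 + C_{q,q} equals the ideal generated by L_1, L_2, …, L_q. -/
/-!
Write `R⁽ᵏ⁾ᵢⱼ` (`pathSum B k i j`) for the sum of the path products from `i` to `j` whose inner entries form an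
admissible sequence in `{1, …, k}`. The largest entry `k` occurs at most once in such a
sequence, and splitting there gives the pivot recursion
`R⁽ᵏ⁾ᵢⱼ = R⁽ᵏ⁻¹⁾ᵢⱼ + R⁽ᵏ⁻¹⁾ᵢₖ R⁽ᵏ⁻¹⁾ₖⱼ`, with `R⁽⁰⁾ = B` and `C_{k,k} = R⁽ᵏ⁻¹⁾ₖₖ`.
For a block matrix `A = [[a, v], [u, D]]` one has `det A + det (D + u v) = (1 + a) det D`.
Applied to the principal minors of the `R⁽ᵗ⁾`, one pivot at a time, this gives
`L_n ≡ (-1)^(n-1) (1 + C_{n,n})` modulo `1 + C_{1,1}, …, 1 + C_{n-1,n-1}`, and the two ideals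
agree by induction on `q`.
-/

open scoped BigOperators

/-- A finite sequence of positive integers is *admissible* if between any two
occurrences of a number `s` there is an entry greater than `s`. -/
def IsAdmissible (l : List ℕ) : Prop :=
  ∀ (l₁ l₂ l₃ : List ℕ) (s : ℕ), l = l₁ ++ s :: (l₂ ++ s :: l₃) → ∃ t ∈ l₂, s < t

/-- `Dset n` is the set of admissible sequences all of whose entries lie in
`{1, …, n-1}` (including the empty sequence). -/
def Dset (n : ℕ) : Set (List ℕ) :=
  {l | IsAdmissible l ∧ ∀ x ∈ l, 1 ≤ x ∧ x < n}

/-- The product `B i i₁ * B i₁ i₂ * ⋯ * B i_c j` along a sequence `[i₁, …, i_c]`;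
the empty sequence contributes `B i j`. -/
def pathProd {A : Type*} [Ring A] (B : ℕ → ℕ → A) (i j : ℕ) : List ℕ → A
  | [] => B i j
  | a :: l => B i a * pathProd B a j l

/-- `M i j = Σ_{(i₁,…,i_c) ∈ D_{min(i,j)}} B i i₁ ⋯ B i_c j`. -/
noncomputable def Mpoly {A : Type*} [Ring A] (B : ℕ → ℕ → A) (i j : ℕ) : A :=
  ∑ᶠ l ∈ Dset (min i j), pathProd B i j l

/-- `C i j` for `i < j` sums `B i i₁ ⋯ B i_c j` over sequences with
`(i, i₁, …, i_c) ∈ D_j`; and `C n n = M n n`. -/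
noncomputable def Cpoly {A : Type*} [Ring A] (B : ℕ → ℕ → A) (i j : ℕ) : A :=
  if i = j then Mpoly B i j
  else ∑ᶠ l ∈ {l : List ℕ | (i :: l) ∈ Dset j}, pathProd B i j l

/-- The generators `B_{i,j}` of the free noncommutative unital ℤ-algebra. -/
noncomputable def Bgen : ℕ → ℕ → FreeAlgebra ℤ (ℕ × ℕ) :=
  fun i j => FreeAlgebra.ι ℤ (i, j)

/-- The commuting indeterminates `B_{i,j}` of the polynomial ring `ℤ[B_{i,j}]`. -/
noncomputable def Bcomm : ℕ → ℕ → MvPolynomial (ℕ × ℕ) ℤ :=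
  fun i j => MvPolynomial.X (i, j)

theorem List.infix_append_cons {α : Type*} {w u v : List α} {a : α}
    (h : w <:+: u ++ a :: v) : w <:+: u ∨ w <:+: v ∨ a ∈ w := by
  rcases List.infix_append_iff.mp h with hu | hav | ⟨w₁, w₂, rfl, hw₁, hw₂⟩
  · exact .inl hu
  · rcases List.infix_cons_iff.mp hav with hpre | hv
    · rcases w with _ | ⟨b, w⟩
      · exact .inl List.nil_infix
      · exact .inr (.inr (by rw [(List.cons_prefix_cons.mp hpre).1]; simp))
    · exact .inr (.inl hv)
  · rcases w₂ with _ | ⟨b, w₂⟩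
    · exact .inl (by simpa using hw₁.isInfix)
    · exact .inr (.inr (by rw [(List.cons_prefix_cons.mp hw₂).1]; simp))

theorem isAdmissible_iff {l : List ℕ} :
    IsAdmissible l ↔ ∀ s m, s :: (m ++ [s]) <:+: l → ∃ t ∈ m, s < t := by
  constructor
  · rintro h s m ⟨l₁, l₃, rfl⟩
    exact h l₁ m l₃ s (by simp)
  · rintro h l₁ l₂ l₃ s rfl
    exact h s l₂ ⟨l₁, l₃, by simp⟩

theorem IsAdmissible.of_infix {l l' : List ℕ} (h : IsAdmissible l) (hl : l' <:+: l) :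
    IsAdmissible l' :=
  isAdmissible_iff.mpr fun s m hm => isAdmissible_iff.mp h s m (hm.trans hl)

theorem IsAdmissible.append_cons {u v : List ℕ} {n : ℕ} (hu : IsAdmissible u)
    (hv : IsAdmissible v) (hun : ∀ x ∈ u, x < n) (hvn : ∀ x ∈ v, x < n) :
    IsAdmissible (u ++ n :: v) := by
  have hnu : n ∉ u := fun h => (hun n h).false
  have hnv : n ∉ v := fun h => (hvn n h).false
  rw [isAdmissible_iff]
  intro s m hw
  rcases List.infix_append_cons hw with hwu | hwv | hnw
  · exact isAdmissible_iff.mp hu s m hwu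
  · exact isAdmissible_iff.mp hv s m hwv
  have hsn : s ≠ n := by
    rintro rfl
    have := hw.sublist.count_le s
    simp [List.count_append, List.count_eq_zero_of_not_mem hnu,
      List.count_eq_zero_of_not_mem hnv] at this
  refine ⟨n, ?_, ?_⟩
  · simpa [hsn.symm] using hnw
  · have hs : s ∈ u ++ n :: v := hw.subset (by simp)
    simp only [List.mem_append, List.mem_cons] at hs
    rcases hs with hs | rfl | hs
    exacts [hun s hs, absurd rfl hsn, hvn s hs]

theorem IsAdmissible.notMem_of_append_cons {u v : List ℕ} {n : ℕ}
    (h : IsAdmissible (u ++ n :: v)) (hle : ∀ x ∈ u ++ n :: v, x ≤ n) : n ∉ u ∧ n ∉ v := by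
  constructor
  · intro hnu
    obtain ⟨p, r, rfl⟩ := List.append_of_mem hnu
    obtain ⟨t, ht, hnt⟩ := h p r v n (by simp)
    exact (hle t (by simp [ht])).not_gt hnt
  · intro hnv
    obtain ⟨p, r, rfl⟩ := List.append_of_mem hnv
    obtain ⟨t, ht, hnt⟩ := h u p r n rfl
    exact (hle t (by simp [ht])).not_gt hnt

theorem notMem_of_mem_Dset {n : ℕ} {l : List ℕ} (hl : l ∈ Dset n) : n ∉ l :=
  fun h => (hl.2 n h).2.false

theorem Dset_one : Dset 1 = {[]} := by
  ext l
  refine ⟨fun hl => List.eq_nil_iff_forall_not_mem.mpr fun x hx => ?_, ?_⟩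
  · have := hl.2 x hx
    omega
  · rintro rfl
    exact ⟨fun l₁ l₂ l₃ s h => by simp at h, by simp⟩

theorem Dset_succ {n : ℕ} (hn : 1 ≤ n) :
    Dset (n + 1) = Dset n ∪ (fun p : List ℕ × List ℕ => p.1 ++ n :: p.2) '' (Dset n ×ˢ Dset n) := by
  ext l
  constructor
  · rintro ⟨hadm, hl⟩
    have hlt : ∀ x ∈ l, x ≠ n → 1 ≤ x ∧ x < n := fun x hx hxn => by
      have := hl x hx
      omega
    by_cases hnl : n ∈ l
    · obtain ⟨u, v, rfl⟩ := List.append_of_mem hnl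
      obtain ⟨hnu, hnv⟩ := hadm.notMem_of_append_cons fun x hx => Nat.le_of_lt_succ (hl x hx).2
      refine .inr ⟨(u, v), ⟨⟨hadm.of_infix List.infix_append_left, fun x hx => ?_⟩,
        ⟨hadm.of_infix ⟨u ++ [n], [], by simp⟩, fun x hx => ?_⟩⟩, rfl⟩
      · exact hlt x (by simp [hx]) (ne_of_mem_of_not_mem hx hnu)
      · exact hlt x (by simp [hx]) (ne_of_mem_of_not_mem hx hnv)
    · exact .inl ⟨hadm, fun x hx => hlt x hx (ne_of_mem_of_not_mem hx hnl)⟩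
  · rintro (⟨hadm, hl⟩ | ⟨⟨u, v⟩, ⟨⟨hu, hun⟩, ⟨hv, hvn⟩⟩, rfl⟩)
    · exact ⟨hadm, fun x hx => by have := hl x hx; omega⟩
    · refine ⟨hu.append_cons hv (fun x hx => (hun x hx).2) (fun x hx => (hvn x hx).2),
        fun x hx => ?_⟩
      simp only [List.mem_append, List.mem_cons] at hx
      rcases hx with hx | rfl | hx
      · have := hun x hx; omega
      · omega
      · have := hvn x hx; omega

theorem Dset_succ_finite (k : ℕ) : (Dset (k + 1)).Finite := by
  induction k with
  | zero => simp [Dset_one]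
  | succ k ih => rw [Dset_succ (by omega)]; exact ih.union ((ih.prod ih).image _)

section PathSum

variable {A : Type*} [Ring A] (B : ℕ → ℕ → A)

def pathSum : ℕ → ℕ → ℕ → A
  | 0 => B
  | k + 1 => fun i j => pathSum k i j + pathSum k i (k + 1) * pathSum k (k + 1) j

theorem pathProd_append_cons (i j a : ℕ) (u v : List ℕ) :
    pathProd B i j (u ++ a :: v) = pathProd B i a u * pathProd B a j v := by
  induction u generalizing i with
  | nil => rfl
  | cons x u ih => simp only [List.cons_append, pathProd, ih, mul_assoc]

theorem finsum_pathProd_Dset (k i j : ℕ) :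
    ∑ᶠ l ∈ Dset (k + 1), pathProd B i j l = pathSum B k i j := by
  induction k generalizing i j with
  | zero => simp [Dset_one, pathProd, pathSum]
  | succ k ih =>
    set S := Dset (k + 1)
    have hS : S.Finite := Dset_succ_finite k
    have hdisj : Disjoint S ((fun p : List ℕ × List ℕ => p.1 ++ (k + 1) :: p.2) '' (S ×ˢ S)) :=
      Set.disjoint_left.mpr fun l hl ⟨p, _, hp⟩ => notMem_of_mem_Dset hl (by simp [← hp])
    have hinj : (S ×ˢ S).InjOn fun p : List ℕ × List ℕ => p.1 ++ (k + 1) :: p.2 :=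
      fun p hp p' _ h => by
        obtain ⟨h₁, -, h₂⟩ := (List.append_cons_inj_of_notMem
          (notMem_of_mem_Dset hp.1) (notMem_of_mem_Dset hp.2)).mp h
        exact Prod.ext h₁ h₂
    rw [Dset_succ (by omega), finsum_mem_union hdisj hS ((hS.prod hS).image _),
      finsum_mem_image hinj, ih, pathSum]
    beta_reduce
    rw [← ih i (k + 1), ← ih (k + 1) j,
      finsum_mem_eq_finite_toFinset_sum _ (hS.prod hS), ← hS.toFinset_prod hS,
      finsum_mem_eq_finite_toFinset_sum _ hS, finsum_mem_eq_finite_toFinset_sum _ hS,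
      Finset.sum_product, Finset.sum_mul_sum]
    simp only [pathProd_append_cons]

theorem Cpoly_self_succ (k : ℕ) : Cpoly B (k + 1) (k + 1) = pathSum B k (k + 1) (k + 1) := by
  rw [Cpoly, if_pos rfl, Mpoly, min_self, finsum_pathProd_Dset]

end PathSum

namespace Matrix

variable {R : Type*} [CommRing R] {m : ℕ}

theorem det_succ_of_row_zero_succ_eq_zero (N : Matrix (Fin (m + 1)) (Fin (m + 1)) R)
    (h : ∀ j : Fin m, N 0 j.succ = 0) : N.det = N 0 0 * (N.submatrix Fin.succ Fin.succ).det := by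
  rw [det_succ_row_zero, Fin.sum_univ_succ]
  simp [h, Fin.succAbove_zero]

theorem det_add_det_pivot (A : Matrix (Fin (m + 1)) (Fin (m + 1)) R) :
    A.det + (of fun i j : Fin m => A i.succ j.succ + A i.succ 0 * A 0 j.succ).det
      = (1 + A 0 0) * (A.submatrix Fin.succ Fin.succ).det := by
  -- `A'` has first row `(1, -v)`; right multiplication by the unitriangular `U` turns it into
  -- `[[1, 0], [u, D + u v]]`, while linearity in the first row gives `det A + det A'`.
  set w : Fin (m + 1) → R := Fin.cons 1 fun j => -A 0 j.succ
  set U : Matrix (Fin (m + 1)) (Fin (m + 1)) R := updateRow 1 0 (Fin.cons 1 fun j => A 0 j.succ)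
  have hU : U.det = 1 := by
    rw [det_of_isUpperTriangular]
    · refine Finset.prod_eq_one fun i _ => ?_
      cases i using Fin.cases <;> simp [U]
    · intro i j hji
      have hi : i ≠ 0 := Fin.ne_zero_of_lt hji
      simpa [U, hi] using one_apply_ne (α := R) (ne_of_gt (show j < i from hji))
  set A' := A.updateRow 0 w
  have hrow : ∀ j : Fin m, (A' * U) 0 j.succ = 0 := fun j => by
    simp [A', U, w, mul_apply, Fin.sum_univ_succ, updateRow_apply, one_apply]
  have h00 : (A' * U) 0 0 = 1 := by
    simp [A', U, w, mul_apply, Fin.sum_univ_succ, updateRow_apply, one_apply]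
  have hpivot : (of fun i j : Fin m => A i.succ j.succ + A i.succ 0 * A 0 j.succ)
      = (A' * U).submatrix Fin.succ Fin.succ := by
    ext i j
    simp [A', U, w, mul_apply, Fin.sum_univ_succ, updateRow_apply, one_apply]
    ring
  have hA' : A'.det = (of fun i j : Fin m => A i.succ j.succ + A i.succ 0 * A 0 j.succ).det := by
    rw [← mul_one A'.det, ← hU, ← det_mul, det_succ_of_row_zero_succ_eq_zero _ hrow, h00, one_mul,
      hpivot]
  have hminor : (A.updateRow 0 (A 0 + w)).submatrix Fin.succ Fin.succ
      = A.submatrix Fin.succ Fin.succ := by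
    ext i j
    simp
  calc A.det + (of fun i j : Fin m => A i.succ j.succ + A i.succ 0 * A 0 j.succ).det
      = (A.updateRow 0 (A 0)).det + (A.updateRow 0 w).det := by rw [updateRow_eq_self, hA']
    _ = (A.updateRow 0 (A 0 + w)).det := (det_updateRow_add A 0 _ _).symm
    _ = (1 + A 0 0) * (A.submatrix Fin.succ Fin.succ).det := by
        rw [det_succ_of_row_zero_succ_eq_zero _ fun j => by simp [w], hminor]
        simp [w, add_comm]

end Matrix

section PathMinor

variable {R : Type*} [CommRing R] (B : ℕ → ℕ → R)

def pathMinor (t n : ℕ) : Matrix (Fin n) (Fin n) R :=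
  Matrix.of fun i j => pathSum B t (t + 1 + i) (t + 1 + j)

theorem pathMinor_pivot (t m : ℕ) :
    (Matrix.of fun i j : Fin m => pathMinor B t (m + 1) i.succ j.succ
      + pathMinor B t (m + 1) i.succ 0 * pathMinor B t (m + 1) 0 j.succ)
      = pathMinor B (t + 1) m := by
  ext i j
  simp only [pathMinor, pathSum, Matrix.of_apply, Fin.val_succ, Fin.val_zero]
  ring_nf

theorem det_pathMinor_sub_mem (t n : ℕ) :
    (pathMinor B t (n + 1)).det - (-1) ^ (n + 1)
        - (-1) ^ n * (1 + pathSum B (t + n) (t + n + 1) (t + n + 1))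
      ∈ Ideal.span ((fun k => 1 + pathSum B k (k + 1) (k + 1)) '' Set.Ico t (t + n)) := by
  induction n generalizing t with
  | zero => simp [pathMinor, add_comm]
  | succ n ih =>
    set I := Ideal.span ((fun k => 1 + pathSum B k (k + 1) (k + 1)) '' Set.Ico t (t + (n + 1)))
    have hdet := Matrix.det_add_det_pivot (pathMinor B t (n + 2))
    rw [pathMinor_pivot] at hdet
    have hpivot : 1 + pathMinor B t (n + 2) 0 0 ∈ I :=
      Ideal.subset_span ⟨t, ⟨le_rfl, by omega⟩, by simp [pathMinor]⟩
    have hmono : Set.Ico (t + 1) (t + 1 + n) ⊆ Set.Ico t (t + (n + 1)) :=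
      Set.Ico_subset_Ico (by omega) (by omega)
    have hrest := Ideal.span_mono (Set.image_mono hmono) (ih (t + 1))
    rw [show t + 1 + n = t + (n + 1) by ring] at hrest
    convert I.sub_mem (I.mul_mem_right ((pathMinor B t (n + 2)).submatrix Fin.succ Fin.succ).det
      hpivot) hrest using 1
    linear_combination hdet

end PathMinor

theorem Ideal.span_image_Icc_eq_of_sub_mem {R : Type*} [CommRing R] {x y : ℕ → R} (u : ℕ → Rˣ)
    (h : ∀ n, y (n + 1) - u n * x (n + 1) ∈ Ideal.span (x '' Set.Icc 1 n)) (n : ℕ) :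
    Ideal.span (x '' Set.Icc 1 n) = Ideal.span (y '' Set.Icc 1 n) := by
  induction n with
  | zero => simp
  | succ n ih =>
    rw [← Set.insert_Icc_right_eq_Icc_add_one (by omega), Set.image_insert_eq,
      Set.image_insert_eq, Ideal.span_insert, Ideal.span_insert, ← ih]
    set I := Ideal.span (x '' Set.Icc 1 n)
    apply le_antisymm <;> refine sup_le ?_ le_sup_right <;> rw [Ideal.span_singleton_le_iff_mem]
    · have hx : x (n + 1) = ↑(u n)⁻¹ * (y (n + 1) - (y (n + 1) - u n * x (n + 1))) := by simp
      rw [hx]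
      exact Ideal.mul_mem_left _ _ (Ideal.sub_mem _
        (Ideal.mem_sup_left (Ideal.mem_span_singleton_self _)) (Ideal.mem_sup_right (h n)))
    · rw [← add_sub_cancel (u n * x (n + 1)) (y (n + 1))]
      exact Ideal.add_mem _ (Ideal.mem_sup_left (Ideal.mul_mem_left _ _
        (Ideal.mem_span_singleton_self _))) (Ideal.mem_sup_right (h n))

theorem ideal_C_eq_ideal_det_general (q : ℕ) :
    Ideal.span ((fun n : ℕ => 1 + Cpoly Bcomm n n) '' Set.Icc 1 q) =
    Ideal.span ((fun n : ℕ =>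
      (Matrix.of fun i j : Fin n => Bcomm ((i : ℕ) + 1) ((j : ℕ) + 1)).det - (-1) ^ n) ''
        Set.Icc 1 q) := by
  refine Ideal.span_image_Icc_eq_of_sub_mem (fun n => (-1) ^ n) (fun n => ?_) q
  have hminor : pathMinor Bcomm 0 (n + 1) = Matrix.of fun i j : Fin (n + 1) =>
      Bcomm ((i : ℕ) + 1) ((j : ℕ) + 1) := by
    ext i j
    simp [pathMinor, pathSum, add_comm]
  have hdiag : (fun k => 1 + pathSum Bcomm k (k + 1) (k + 1))
      = (fun k => 1 + Cpoly Bcomm k k) ∘ (· + 1) := by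
    ext k
    simp [Cpoly_self_succ]
  have hIcc : (· + 1) '' Set.Ico 0 n = Set.Icc 1 n := by
    rw [Set.image_add_const_Ico, Set.Ico_add_one_right_eq_Icc, zero_add]
  have h := det_pathMinor_sub_mem Bcomm 0 n
  rw [hminor, hdiag, Set.image_comp, zero_add, hIcc] at h
  convert h using 1
  simp [sub_sub, Cpoly_self_succ]

/-- the ideal of `ℤ[B_{i,j}]` generated by `1 + C_{1,1}, …, 1 + C_{q,q}`
equals the ideal generated by `L_n = det[(B_{i,j})_{1≤i,j≤n}] − (−1)^n`, `n = 1, …, q`. -/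
theorem ideal_C_eq_ideal_det (q : ℕ) (hq : 1 ≤ q) :
    Ideal.span ((fun n : ℕ => 1 + Cpoly Bcomm n n) '' Set.Icc 1 q) =
    Ideal.span ((fun n : ℕ =>
      (Matrix.of fun i j : Fin n => Bcomm ((i : ℕ) + 1) ((j : ℕ) + 1)).det - (-1) ^ n) ''
        Set.Icc 1 q) :=
  ideal_C_eq_ideal_det_general q
end

section
/- Let ⪯ be a monomial order on ℤ[B_{i,j}] with the property that every monomial divisible by some diagonal variable B_{m,m} is strictly greater than every monomial involving only off-diagonal variables B_{i,j} (i ≠ j), and let I be the ideal generated by 1 + C_{1,1}, …, 1 + C_{q,q}. Then for every n the leading monomial of 1 + C_{n,n} with respect to ⪯ is B_{n,n}, and the leading monomial of every nonzero element of I is divisible by B_{n,n} for some n; that is, the polynomials 1 + C_{n,n}, n = 1, …, q, form a Gröbner basis of I with respect to ⪯. -/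
/-!
The empty sequence contributes `B_{n,n}` to `C_{n,n}`; every other term is a closed path
`n → i₁ → ⋯ → i_c → n` whose consecutive indices differ (admissibility, entries below `n`),
so `1 + C_{n,n} = B_{n,n} + R_n` with `R_n` free of diagonal variables, hence below `B_{n,n}`.

For the second claim substitute `B_{n,n} ↦ -R_n` for `1 ≤ n ≤ q`. This kills the ideal, never
raises a monomial, and fixes every monomial free of these `B_{n,n}`. So if the leading monomial
of `f` avoided them, its coefficient would survive in the image of `f`, which is `0`.
-/

open scoped BigOperators

open MvPolynomial Relation

namespace IsAdmissible

lemma nil : IsAdmissible [] := by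
  intro l₁ l₂ l₃ s h
  simp at h

lemma of_append_left {u v : List ℕ} (h : IsAdmissible (u ++ v)) : IsAdmissible u := by
  rintro l₁ l₂ l₃ s rfl
  exact h l₁ l₂ (l₃ ++ v) s (by simp)

lemma of_append_right {u v : List ℕ} (h : IsAdmissible (u ++ v)) : IsAdmissible v := by
  rintro l₁ l₂ l₃ s rfl
  exact h (u ++ l₁) l₂ l₃ s (by simp)

lemma isChain_ne : ∀ {l : List ℕ}, IsAdmissible l → l.IsChain (· ≠ ·)
  | [], _ => .nil
  | [_], _ => .singleton _
  | a :: b :: t, h => by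
    refine .cons_cons ?_ (isChain_ne (of_append_right (u := [a]) h))
    rintro rfl
    obtain ⟨x, hx, -⟩ := h [] [] t a rfl
    simp at hx

lemma not_mem_of_forall_le {l₁ l₂ : List ℕ} {s : ℕ} (h : IsAdmissible (l₁ ++ s :: l₂))
    (hs : ∀ x ∈ l₁ ++ l₂, x ≤ s) : s ∉ l₁ ++ l₂ := by
  intro hmem
  rcases List.mem_append.mp hmem with h₁ | h₂
  · obtain ⟨u, w, rfl⟩ := List.append_of_mem h₁
    obtain ⟨t, ht, hst⟩ := h u w l₂ s (by simp)
    exact (hs t (by simp [ht])).not_gt hst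
  · obtain ⟨u, w, rfl⟩ := List.append_of_mem h₂
    obtain ⟨t, ht, hst⟩ := h l₁ u w s rfl
    exact (hs t (by simp [ht])).not_gt hst

lemma length_lt_two_pow (n : ℕ) : ∀ {l : List ℕ}, IsAdmissible l → (∀ x ∈ l, x < n) →
    l.length < 2 ^ n := by
  induction n with
  | zero =>
    rintro (_ | ⟨a, l⟩) _ hl
    · simp
    · exact absurd (hl a (by simp)) (Nat.not_lt_zero a)
  | succ n ih =>
    intro l hadm hl
    by_cases hn : n ∈ l
    · obtain ⟨l₁, l₂, rfl⟩ := List.append_of_mem hn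
      have hle : ∀ x ∈ l₁ ++ l₂, x ≤ n := fun x hx => Nat.lt_succ_iff.mp (hl x (by aesop))
      have hlt : ∀ x ∈ l₁ ++ l₂, x < n := fun x hx =>
        (hle x hx).lt_of_ne (by rintro rfl; exact hadm.not_mem_of_forall_le hle hx)
      have h₁ := ih hadm.of_append_left fun x hx => hlt x (by simp [hx])
      have h₂ := ih (of_append_right (u := [n]) hadm.of_append_right)
        fun x hx => hlt x (by simp [hx])
      simp only [List.length_append, List.length_cons]
      omega
    · have := ih hadm fun x hx =>
        (Nat.lt_succ_iff.mp (hl x hx)).lt_of_ne (by rintro rfl; exact hn hx)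
      rw [pow_succ]
      omega

lemma isChain_ne_cons_append {n : ℕ} {l : List ℕ} (h : IsAdmissible l)
    (hlt : ∀ x ∈ l, x < n) (hne : l ≠ []) : (n :: (l ++ [n])).IsChain (· ≠ ·) := by
  refine .cons (h.isChain_ne.append (.singleton n) ?_) ?_
  · intro x hx y hy
    simp only [List.head?_cons, Option.mem_some_iff] at hy
    exact (hy ▸ hlt x (List.mem_of_mem_getLast? hx)).ne
  · intro y hy
    rw [List.head?_append_of_ne_nil _ hne] at hy
    exact (hlt y (List.mem_of_mem_head? hy)).ne'

end IsAdmissible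

lemma nil_mem_Dset (n : ℕ) : [] ∈ Dset n :=
  ⟨.nil, by simp⟩

lemma Dset_finite (n : ℕ) : (Dset n).Finite := by
  refine ((List.finite_length_lt (Fin n) (2 ^ n)).image (List.map Fin.val)).subset ?_
  rintro l ⟨hadm, hmem⟩
  refine ⟨l.pmap Fin.mk fun x hx => (hmem x hx).2, ?_, ?_⟩
  · simpa using hadm.length_lt_two_pow n fun x hx => (hmem x hx).2
  · simp [List.map_pmap]

namespace Relation.ReflGen

variable {α : Type*} {r : α → α → Prop}

lemma add_right [Add α] [CovariantClass α α (Function.swap (· + ·)) r] {a b : α} (c : α)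
    (h : ReflGen r a b) : ReflGen r (a + c) (b + c) := by
  cases h with
  | refl => rfl
  | single h => exact .single (CovariantClass.elim (μ := Function.swap (· + ·)) c h)

lemma add [AddCommMagma α] [CovariantClass α α (Function.swap (· + ·)) r] [IsTrans α r]
    {a b c d : α} (hab : ReflGen r a b) (hcd : ReflGen r c d) : ReflGen r (a + c) (b + d) := by
  have hcd' := hcd.add_right b
  rw [add_comm c, add_comm d] at hcd'
  exact _root_.trans (hab.add_right c) hcd'

end Relation.ReflGen

namespace MvPolynomial

variable {σ R : Type*} (r : (σ →₀ ℕ) → (σ →₀ ℕ) → Prop)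

def IsLeadingMonomial [CommSemiring R] (f : MvPolynomial σ R) (d : σ →₀ ℕ) : Prop :=
  d ∈ f.support ∧ ∀ m ∈ f.support, m ≠ d → r m d

def SupportBelow [CommSemiring R] (p : MvPolynomial σ R) (d : σ →₀ ℕ) : Prop :=
  ∀ m ∈ p.support, ReflGen r m d

variable {r}

lemma isLeadingMonomial_X_add [CommSemiring R] [Nontrivial R] [Std.Irrefl r] {v : σ}
    {p : MvPolynomial σ R} (hp : ∀ m ∈ p.support, r m (.single v 1)) :
    IsLeadingMonomial r (X v + p) (.single v 1) := by
  classical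
  have hv : Finsupp.single v 1 ∉ p.support := fun h => irrefl _ (hp _ h)
  refine ⟨?_, fun m hm hne => hp m ?_⟩
  · rw [mem_support_iff, coeff_add, coeff_X, if_pos rfl, notMem_support_iff.mp hv, add_zero]
    exact one_ne_zero
  · rcases Finset.mem_union.mp (support_add hm) with hX | hm
    · exact absurd (Finset.mem_singleton.mp (support_X (R := R) ▸ hX)) hne
    · exact hm

lemma supportBelow_C [CommSemiring R] (c : R) : SupportBelow r (C c : MvPolynomial σ R) 0 := by
  classical
  intro m hm
  rw [mem_support_iff, coeff_C] at hm
  rw [(ite_ne_right_iff.mp hm).1.symm]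

lemma aeval_eq_self_of_forall_mem_vars [CommSemiring R] {g : σ → MvPolynomial σ R}
    {p : MvPolynomial σ R} (hg : ∀ v ∈ p.vars, g v = X v) : aeval g p = p :=
  hom_congr_vars (f₁ := (aeval g).toRingHom) (f₂ := RingHom.id _) (by ext; simp)
    (fun v hv _ => by simpa using hg v hv) rfl

variable [CovariantClass (σ →₀ ℕ) (σ →₀ ℕ) (Function.swap (· + ·)) r] [IsTrans (σ →₀ ℕ) r]

variable [CommSemiring R]

lemma SupportBelow.mul {p q : MvPolynomial σ R} {a b : σ →₀ ℕ} (hp : SupportBelow r p a)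
    (hq : SupportBelow r q b) : SupportBelow r (p * q) (a + b) := by
  classical
  intro m hm
  obtain ⟨m₁, hm₁, m₂, hm₂, rfl⟩ := Finset.mem_add.mp (support_mul p q hm)
  exact (hp m₁ hm₁).add (hq m₂ hm₂)

lemma SupportBelow.pow {p : MvPolynomial σ R} {v : σ} (hp : SupportBelow r p (.single v 1)) :
    ∀ k : ℕ, SupportBelow r (p ^ k) (.single v k)
  | 0 => by simpa using supportBelow_C (r := r) (σ := σ) (1 : R)
  | k + 1 => by
    rw [pow_succ, Finsupp.single_add]
    exact (hp.pow k).mul hp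

lemma supportBelow_aeval_monomial {g : σ → MvPolynomial σ R}
    (hg : ∀ v, SupportBelow r (g v) (.single v 1)) (m : σ →₀ ℕ) (c : R) :
    SupportBelow r (aeval g (monomial m c)) m := by
  induction m using Finsupp.induction with
  | zero => simpa using supportBelow_C c
  | single_add v k m _ _ ih =>
    rw [monomial_single_add, map_mul, map_pow, aeval_X]
    exact ((hg v).pow k).mul ih

lemma coeff_aeval_eq_coeff [Std.Irrefl r] {g : σ → MvPolynomial σ R}
    (hg : ∀ v, SupportBelow r (g v) (.single v 1)) {f : MvPolynomial σ R} {d : σ →₀ ℕ}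
    (hd : ∀ m ∈ f.support, m ≠ d → r m d) (hfix : ∀ v ∈ d.support, g v = X v) :
    coeff d (aeval g f) = coeff d f := by
  classical
  conv_lhs => rw [← support_sum_monomial_coeff f]
  rw [map_sum, coeff_sum, Finset.sum_eq_single d]
  · rw [aeval_eq_self_of_forall_mem_vars, coeff_monomial, if_pos rfl]
    intro v hv
    obtain ⟨e, he, hve⟩ := (mem_vars_iff_mem_support v).mp hv
    exact hfix v (Finset.mem_singleton.mp (support_monomial_subset he) ▸ hve)
  · intro m hm hne
    by_contra h
    cases supportBelow_aeval_monomial hg m _ d (mem_support_iff.mpr h) with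
    | refl => exact hne rfl
    | single hdm => exact irrefl _ (_root_.trans hdm (hd m hm hne))
  · intro hd
    rw [notMem_support_iff.mp hd, monomial_zero, map_zero, coeff_zero]

theorem exists_mem_support_of_mem_span_X_add [Std.Irrefl r] {R : Type*} [CommRing R]
    {S : Set σ} {p : σ → MvPolynomial σ R} (hpS : ∀ v ∈ S, p v ∈ supported R Sᶜ)
    (hp : ∀ v ∈ S, ∀ m ∈ (p v).support, r m (.single v 1)) {f : MvPolynomial σ R}
    (hf : f ∈ Ideal.span ((fun v => X v + p v) '' S)) {d : σ →₀ ℕ}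
    (hd : IsLeadingMonomial r f d) : ∃ v ∈ S, d v ≠ 0 := by
  classical
  by_contra! hdS
  let g : σ → MvPolynomial σ R := fun v => if v ∈ S then -p v else X v
  have hg : ∀ v, SupportBelow r (g v) (.single v 1) := by
    intro v
    by_cases hv : v ∈ S
    · simpa [g, hv, SupportBelow] using fun m hm => ReflGen.single (hp v hv m hm)
    · intro m hm
      rw [show g v = X v from if_neg hv] at hm
      rw [Finset.mem_singleton.mp (support_monomial_subset hm)]
  have hspan : Ideal.span ((fun v => X v + p v) '' S) ≤ RingHom.ker (aeval g) := by
    rw [Ideal.span_le]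
    rintro _ ⟨v, hv, rfl⟩
    have hpv : aeval g (p v) = p v :=
      aeval_eq_self_of_forall_mem_vars fun w hw => if_neg (mem_supported.mp (hpS v hv) hw)
    rw [SetLike.mem_coe, RingHom.mem_ker, map_add, aeval_X, hpv, show g v = -p v from if_pos hv,
      neg_add_cancel]
  have hcoeff := coeff_aeval_eq_coeff hg hd.2
    fun v hv => if_neg fun hvS => Finsupp.mem_support_iff.mp hv (hdS v hvS)
  rw [RingHom.mem_ker.mp (hspan hf), coeff_zero] at hcoeff
  exact mem_support_iff.mp hd.1 hcoeff.symm

end MvPolynomial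

lemma pathProd_mem_supported : ∀ {i j : ℕ} {l : List ℕ}, (i :: (l ++ [j])).IsChain (· ≠ ·) →
    pathProd Bcomm i j l ∈ supported ℤ (Set.diagonal ℕ)ᶜ
  | _, _, [], h => X_mem_supported.mpr (List.isChain_pair.mp h)
  | _, _, _ :: _, h => by
    rw [List.cons_append, List.isChain_cons_cons] at h
    exact Subalgebra.mul_mem _ (X_mem_supported.mpr h.1) (pathProd_mem_supported h.2)

lemma one_add_Cpoly_self_eq (n : ℕ) :
    ∃ R ∈ supported ℤ (Set.diagonal ℕ)ᶜ, 1 + Cpoly Bcomm n n = X (n, n) + R := by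
  classical
  have hfin := Dset_finite n
  have hnil : [] ∈ hfin.toFinset := hfin.mem_toFinset.mpr (nil_mem_Dset n)
  refine ⟨1 + ∑ l ∈ hfin.toFinset.erase [], pathProd Bcomm n n l, ?_, ?_⟩
  · refine Subalgebra.add_mem _ (Subalgebra.one_mem _) (Subalgebra.sum_mem _ fun l hl => ?_)
    obtain ⟨hne, hl⟩ := Finset.mem_erase.mp hl
    obtain ⟨hadm, hmem⟩ := hfin.mem_toFinset.mp hl
    exact pathProd_mem_supported <|
      hadm.isChain_ne_cons_append (fun x hx => (hmem x hx).2) hne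
  · rw [Cpoly, if_pos rfl, Mpoly, min_self, finsum_mem_eq_finite_toFinset_sum _ hfin,
      ← Finset.add_sum_erase _ _ hnil]
    simp only [pathProd, Bcomm]
    ring

theorem C_diag_groebner_basis_general (q : ℕ)
    (lt : ((ℕ × ℕ) →₀ ℕ) → ((ℕ × ℕ) →₀ ℕ) → Prop)
    (hlin : IsStrictTotalOrder ((ℕ × ℕ) →₀ ℕ) lt)
    (hadd : ∀ a b c : (ℕ × ℕ) →₀ ℕ, lt a b → lt (a + c) (b + c))
    (hdiag : ∀ m m' : (ℕ × ℕ) →₀ ℕ,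
      (∃ v : ℕ × ℕ, v.1 = v.2 ∧ m v ≠ 0) →
      (∀ v : ℕ × ℕ, v.1 = v.2 → m' v = 0) → lt m' m) :
    (∀ n : ℕ, 1 ≤ n → n ≤ q →
      Finsupp.single ((n, n) : ℕ × ℕ) 1 ∈ (1 + Cpoly Bcomm n n).support ∧
      ∀ m ∈ (1 + Cpoly Bcomm n n).support,
        m ≠ Finsupp.single ((n, n) : ℕ × ℕ) 1 →
          lt m (Finsupp.single ((n, n) : ℕ × ℕ) 1)) ∧
    (∀ f ∈ Ideal.span ((fun n : ℕ => 1 + Cpoly Bcomm n n) '' Set.Icc 1 q), f ≠ 0 →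
      ∀ lm ∈ f.support, (∀ m ∈ f.support, m ≠ lm → lt m lm) →
        ∃ n : ℕ, 1 ≤ n ∧ n ≤ q ∧ lm (n, n) ≠ 0) := by
  have := hlin
  have : CovariantClass _ _ (Function.swap (· + ·)) lt := ⟨fun c a b h => hadd a b c h⟩
  choose R hRoff hR using one_add_Cpoly_self_eq
  have hbelow (n : ℕ) : ∀ m ∈ (R n).support, lt m (.single (n, n) 1) := fun m hm =>
    hdiag _ m ⟨(n, n), rfl, by simp⟩ fun v hv => Finsupp.notMem_support_iff.mp fun hmv =>
      mem_supported.mp (hRoff n) ((mem_vars_iff_mem_support v).mpr ⟨m, hm, hmv⟩) hv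
  refine ⟨fun n _ _ => hR n ▸ isLeadingMonomial_X_add (hbelow n), ?_⟩
  intro f hf _ lm hlm hmax
  let S : Set (ℕ × ℕ) := (fun n => (n, n)) '' Set.Icc 1 q
  have hS : S ⊆ Set.diagonal ℕ := by
    rintro _ ⟨n, -, rfl⟩
    exact Set.mem_diagonal n
  have hspan : (fun n : ℕ => 1 + Cpoly Bcomm n n) '' Set.Icc 1 q
      = (fun v : ℕ × ℕ => X v + R v.1) '' S := by
    simp only [S, Set.image_image, hR]
  obtain ⟨_, ⟨n, hn, rfl⟩, hlm⟩ := exists_mem_support_of_mem_span_X_add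
    (S := S) (p := fun v => R v.1)
    (by rintro _ ⟨n, -, rfl⟩; exact supported_mono (Set.compl_subset_compl.mpr hS) (hRoff n))
    (by rintro _ ⟨n, -, rfl⟩; exact hbelow n) (hspan ▸ hf) ⟨hlm, hmax⟩
  exact ⟨n, hn.1, hn.2, hlm⟩

/-- for any monomial order in which every monomial divisible by a diagonal
variable is greater than every monomial in the off-diagonal variables, the polynomials
`1 + C_{n,n}`, `n = 1, …, q`, form a Gröbner basis of the ideal they generate:
the leading monomial of `1 + C_{n,n}` is `B_{n,n}`, and the leading monomial of any
nonzero element of the ideal is divisible by some `B_{n,n}`. -/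
theorem C_diag_groebner_basis (q : ℕ) (hq : 1 ≤ q)
    (lt : ((ℕ × ℕ) →₀ ℕ) → ((ℕ × ℕ) →₀ ℕ) → Prop)
    (hlin : IsStrictTotalOrder ((ℕ × ℕ) →₀ ℕ) lt)
    (hwf : WellFounded lt)
    (hadd : ∀ a b c : (ℕ × ℕ) →₀ ℕ, lt a b → lt (a + c) (b + c))
    (hdiag : ∀ m m' : (ℕ × ℕ) →₀ ℕ,
      (∃ v : ℕ × ℕ, v.1 = v.2 ∧ m v ≠ 0) →
      (∀ v : ℕ × ℕ, v.1 = v.2 → m' v = 0) → lt m' m) :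
    (∀ n : ℕ, 1 ≤ n → n ≤ q →
      Finsupp.single ((n, n) : ℕ × ℕ) 1 ∈ (1 + Cpoly Bcomm n n).support ∧
      ∀ m ∈ (1 + Cpoly Bcomm n n).support,
        m ≠ Finsupp.single ((n, n) : ℕ × ℕ) 1 →
          lt m (Finsupp.single ((n, n) : ℕ × ℕ) 1)) ∧
    (∀ f ∈ Ideal.span ((fun n : ℕ => 1 + Cpoly Bcomm n n) '' Set.Icc 1 q), f ≠ 0 →
      ∀ lm ∈ f.support, (∀ m ∈ f.support, m ≠ lm → lt m lm) →
        ∃ n : ℕ, 1 ≤ n ∧ n ≤ q ∧ lm (n, n) ≠ 0) :=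
  C_diag_groebner_basis_general q lt hlin hadd hdiag
end
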